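/- arXiv:2408.01759 — 4 statements merged into one kernel-verified Lean document; each statement's English description precedes it below -/
import Mathlib

section
/- Let x, y be real numbers with x > y > 0. Then 2πy + Σ_{n=1}^∞ (r_4(n)/n) · (e^{−πn(x−y)} − e^{−πn(x+y)}) = 2πy/(x² − y²) + Σ_{n=1}^∞ (r_4(n)/n) · (e^{−πn/(x+y)} − e^{−πn/(x−y)}). -/
open scoped Real BigOperators

/-- Number of representations of `n` as a sum of `k` squares of integers. -/
noncomputable def rk (k n : ℕ) : ℕ :=
  Nat.card {v : Fin k → ℤ // ∑ i, (v i)^2 = (n : ℤ)}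

/-- Bessel function of the first kind of real order `ν`. -/
noncomputable def besselJ (ν t : ℝ) : ℝ :=
  ∑' m : ℕ, (-1 : ℝ)^m * (t/2) ^ (2*(m:ℝ)+ν) / ((m.factorial : ℝ) * Real.Gamma ((m:ℝ)+ν+1))

/-- Modified Bessel function of the first kind of real order `ν`. -/
noncomputable def besselI (ν t : ℝ) : ℝ :=
  ∑' m : ℕ, (t/2) ^ (2*(m:ℝ)+ν) / ((m.factorial : ℝ) * Real.Gamma ((m:ℝ)+ν+1))

/-- Modified Bessel function of the second kind of complex order `ν`. -/
noncomputable def besselK (ν : ℂ) (t : ℝ) : ℂ :=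
  ∫ u in Set.Ioi (0:ℝ), (Real.exp (-t * Real.cosh u) : ℂ) * Complex.cosh (ν * u)

/-- Gauss hypergeometric series. -/
noncomputable def hyp2F1 (a b c z : ℂ) : ℂ :=
  ∑' ℓ : ℕ, ((ascPochhammer ℂ ℓ).eval a * (ascPochhammer ℂ ℓ).eval b) /
    ((ascPochhammer ℂ ℓ).eval c * (ℓ.factorial : ℂ)) * z ^ ℓ

/-- Sum-of-divisors function with natural exponent. -/
noncomputable def sigmaNat (k n : ℕ) : ℕ := ∑ d ∈ n.divisors, d^k

/-- Divisor function with complex exponent. -/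
noncomputable def sigmaC (z : ℂ) (n : ℕ) : ℂ := ∑ d ∈ n.divisors, (d:ℂ) ^ z

/-- Dirichlet series attached to sums of `k` squares. -/
noncomputable def zetaK (k : ℕ) (s : ℂ) : ℂ := ∑' n : ℕ, (rk k (n+1) : ℂ) * ((n:ℂ)+1) ^ (-s)

/-- Completed Dirichlet series attached to sums of `k` squares. -/
noncomputable def etaK (k : ℕ) (s : ℂ) : ℂ := (π:ℂ) ^ (-s) * Complex.Gamma s * zetaK k s

/-- Gauss sum of a Dirichlet character. -/
noncomputable def gaussSumChar {q : ℕ} (χ : DirichletCharacter ℂ q) : ℂ :=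
  ∑ ℓ ∈ Finset.Ico 1 q, χ ((ℓ : ℕ) : ZMod q) * Complex.exp (2*(π:ℂ)*Complex.I*(ℓ:ℂ)/(q:ℂ))

/-!
With `θ t = ∑ n : ℤ, exp (-π t n²)`, grouping the terms of `θ t ^ k` by the value of the sum of
squares gives `θ t ^ k = ∑ n, r_k(n) exp (-π t n)`. Integrating termwise, each of the two series
is `π ∫ (θ ^ 4 - 1)`, over `[x - y, x + y]` and over `[1/(x + y), 1/(x - y)]` respectively. The
modular relation `θ (1/t) = √t θ t` makes `θ(t)⁴ dt` invariant under `t ↦ 1/t`, so the two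
integrals of `θ ^ 4` agree, and what remains is `π` times the lengths `2y` and `2y/(x² - y²)` of
the two intervals.
-/

open Real MeasureTheory Set

noncomputable def theta (t : ℝ) : ℝ := ∑' n : ℤ, rexp (-π * t * n ^ 2)

lemma summable_exp_neg_mul_int_sq {t : ℝ} (ht : 0 < t) :
    Summable fun n : ℤ => rexp (-π * t * n ^ 2) := by
  have h := ((summable_jacobiTheta₂_term_iff 0 (t * Complex.I)).2 (by simpa using ht)).norm
  refine h.congr fun n => ?_
  rw [norm_jacobiTheta₂_term]
  simp only [Complex.mul_im, Complex.ofReal_re, Complex.I_im, Complex.ofReal_im,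
    Complex.I_re, Complex.zero_im]
  ring_nf

lemma continuousOn_theta : ContinuousOn theta (Ioi 0) := by
  have hIci : ∀ c, 0 < c → ContinuousOn theta (Ici c) := fun c hc =>
    continuousOn_tsum (fun n => by fun_prop) (summable_exp_neg_mul_int_sq hc) fun n t ht => by
      rw [norm_of_nonneg (exp_pos _).le, exp_le_exp]
      have : c * (n : ℝ) ^ 2 ≤ t * n ^ 2 := by gcongr; exact ht
      nlinarith [pi_pos]
  refine continuousOn_of_forall_continuousAt fun t ht => ?_
  exact (hIci (t / 2) (half_pos ht)).continuousAt (Ici_mem_nhds (half_lt_self ht))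

lemma theta_inv {t : ℝ} (ht : 0 < t) : theta t⁻¹ = √t * theta t := by
  rw [theta, theta, tsum_exp_neg_mul_int_sq ht, sqrt_eq_rpow, ← mul_assoc,
    mul_one_div_cancel (by positivity), one_mul]
  simp only [div_eq_mul_inv]

lemma theta_inv_pow_four {t : ℝ} (ht : 0 < t) : theta t⁻¹ ^ 4 = t ^ 2 * theta t ^ 4 := by
  rw [theta_inv ht, mul_pow, show (4 : ℕ) = 2 * 2 from rfl, pow_mul, sq_sqrt ht.le]

theorem hasSum_fin_pi_prod {ι : Type*} {f : ι → ℝ} (hf : Summable f) (hf0 : 0 ≤ f) (k : ℕ) :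
    HasSum (fun v : Fin k → ι => ∏ i, f (v i)) ((∑' i, f i) ^ k) := by
  induction k with
  | zero => simp
  | succ k ih =>
    have hg0 : 0 ≤ fun v : Fin k → ι => ∏ i, f (v i) := fun v =>
      Finset.prod_nonneg fun i _ => hf0 (v i)
    have hs := Summable.mul_of_nonneg hf ih.summable hf0 hg0
    have hprod := HasSum.mul hf.hasSum ih hs
    rw [← pow_succ'] at hprod
    rw [← (Fin.consEquiv fun _ => ι).hasSum_iff]
    simpa [Function.comp_def, Fin.prod_univ_succ] using hprod

lemma hasSum_theta_pow {t : ℝ} (ht : 0 < t) (k : ℕ) :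
    HasSum (fun v : Fin k → ℤ => rexp (-π * t * ∑ i, (v i : ℝ) ^ 2)) (theta t ^ k) := by
  simpa only [theta, Finset.mul_sum, exp_sum] using
    hasSum_fin_pi_prod (f := fun n : ℤ => rexp (-π * t * n ^ 2)) (summable_exp_neg_mul_int_sq ht)
      (fun _ => (exp_pos _).le) k

def sumSq {k : ℕ} (v : Fin k → ℤ) : ℕ := (∑ i, v i ^ 2).toNat

lemma sumSq_eq_iff {k : ℕ} (v : Fin k → ℤ) (n : ℕ) : sumSq v = n ↔ ∑ i, v i ^ 2 = n := by
  have : 0 ≤ ∑ i, v i ^ 2 := Finset.sum_nonneg fun i _ => sq_nonneg (v i)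
  unfold sumSq
  omega

lemma cast_sumSq {k : ℕ} (v : Fin k → ℤ) : (sumSq v : ℝ) = ∑ i, (v i : ℝ) ^ 2 := by
  have h := (sumSq_eq_iff v (sumSq v)).1 rfl
  exact_mod_cast h.symm

lemma nat_card_sumSq_fiber (k n : ℕ) : Nat.card (sumSq ⁻¹' {n} : Set (Fin k → ℤ)) = rk k n :=
  Nat.card_congr (Equiv.subtypeEquivRight fun v => sumSq_eq_iff v n)

lemma rk_zero (k : ℕ) : rk k 0 = 1 := by
  rw [rk, Nat.card_eq_one_iff_exists]
  refine ⟨⟨0, by simp⟩, fun ⟨v, hv⟩ => Subtype.ext (funext fun i => ?_)⟩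
  have := (Finset.sum_eq_zero_iff_of_nonneg fun j _ => sq_nonneg (v j)).1 hv i (Finset.mem_univ i)
  simpa using this

lemma hasSum_rk_mul_exp {t : ℝ} (ht : 0 < t) (k : ℕ) :
    HasSum (fun n : ℕ => (rk k n : ℝ) * rexp (-π * t * n)) (theta t ^ k) := by
  refine ((hasSum_theta_pow ht k).tsum_fiberwise sumSq).congr_fun fun n => ?_
  have hconst : ∀ v : (sumSq ⁻¹' {n} : Set (Fin k → ℤ)),
      rexp (-π * t * ∑ i, ((v : Fin k → ℤ) i : ℝ) ^ 2) = rexp (-π * t * n) := by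
    rintro ⟨v, hv⟩
    rw [← cast_sumSq, show sumSq v = n from hv]
  rw [tsum_congr hconst, tsum_const, nat_card_sumSq_fiber, nsmul_eq_mul]

lemma hasSum_rk_succ_mul_exp {t : ℝ} (ht : 0 < t) (k : ℕ) :
    HasSum (fun n : ℕ => (rk k (n + 1) : ℝ) * rexp (-π * (n + 1) * t)) (theta t ^ k - 1) := by
  have h := (hasSum_nat_add_iff' 1).2 (hasSum_rk_mul_exp ht k)
  simp only [Finset.range_one, Finset.sum_singleton, rk_zero, Nat.cast_zero, Nat.cast_one,
    mul_zero, exp_zero, mul_one] at h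
  refine h.congr_fun fun n => ?_
  push_cast
  ring_nf

lemma integral_exp_neg_mul {l : ℝ} (hl : l ≠ 0) (a b : ℝ) :
    ∫ t in a..b, rexp (-l * t) = (rexp (-l * a) - rexp (-l * b)) / l := by
  rw [intervalIntegral.integral_comp_mul_left (fun t => rexp t) (neg_ne_zero.2 hl), integral_exp,
    smul_eq_mul, div_eq_inv_mul, inv_neg]
  ring

theorem hasSum_integral_mul_exp_neg {c l : ℕ → ℝ} {F : ℝ → ℝ} {a b : ℝ} (hab : a ≤ b)
    (hc : 0 ≤ c) (hl : ∀ n, 0 < l n) (hsum : Summable fun n => c n * rexp (-l n * a))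
    (hF : ∀ t ∈ Ioc a b, HasSum (fun n => c n * rexp (-l n * t)) (F t)) :
    HasSum (fun n => c n * (rexp (-l n * a) - rexp (-l n * b)) / l n) (∫ t in a..b, F t) := by
  have hdom : ∀ n, ∀ t ∈ Ioc a b, ‖c n * rexp (-l n * t)‖ ≤ c n * rexp (-l n * a) := by
    intro n t ht
    rw [norm_of_nonneg (mul_nonneg (hc n) (exp_pos _).le)]
    exact mul_le_mul_of_nonneg_left (exp_le_exp.2 (by nlinarith [hl n, ht.1])) (hc n)
  rw [← uIoc_of_le hab] at hdom hF
  have h := intervalIntegral.hasSum_integral_of_dominated_convergence (μ := volume)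
    (fun n _ => c n * rexp (-l n * a)) (fun n => by fun_prop)
    (fun n => .of_forall (hdom n)) (.of_forall fun _ _ => hsum) intervalIntegrable_const
    (.of_forall hF)
  refine h.congr_fun fun n => ?_
  rw [intervalIntegral.integral_const_mul, integral_exp_neg_mul (hl n).ne', mul_div_assoc]

lemma intervalIntegrable_theta_pow {a b : ℝ} (ha : 0 < a) (hb : 0 < b) (k : ℕ) :
    IntervalIntegrable (fun t => theta t ^ k) volume a b :=
  ((continuousOn_theta.pow k).mono fun _ ht =>
    lt_of_lt_of_le (lt_min ha hb) ht.1).intervalIntegrable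

lemma tsum_rk_div_mul_exp_sub {a b : ℝ} (ha : 0 < a) (hab : a ≤ b) (k : ℕ) :
    ∑' n : ℕ, (rk k (n + 1) : ℝ) / (n + 1) * (rexp (-π * (n + 1) * a) - rexp (-π * (n + 1) * b))
      = π * ((∫ t in a..b, theta t ^ k) - (b - a)) := by
  have h := hasSum_integral_mul_exp_neg (c := fun n => π * rk k (n + 1))
    (l := fun n => π * (n + 1)) (F := fun t => π * (theta t ^ k - 1)) hab
    (fun n => by positivity) (fun n => by positivity) ?_ ?_
  · rw [intervalIntegral.integral_const_mul, intervalIntegral.integral_sub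
      (intervalIntegrable_theta_pow ha (ha.trans_le hab) k) intervalIntegrable_const,
      intervalIntegral.integral_const, smul_eq_mul, mul_one] at h
    rw [← h.tsum_eq]
    refine tsum_congr fun n => ?_
    field_simp
  · simpa only [neg_mul, mul_assoc] using ((hasSum_rk_succ_mul_exp ha k).mul_left π).summable
  · intro t ht
    simpa only [neg_mul, mul_assoc] using
      (hasSum_rk_succ_mul_exp (ha.trans ht.1) k).mul_left π

lemma integral_inv_eq_of_inv_symm {f : ℝ → ℝ} (hf : ContinuousOn f (Ioi 0))
    (hsymm : ∀ t, 0 < t → f t⁻¹ = t ^ 2 * f t) {a b : ℝ} (ha : 0 < a) (hb : 0 < b) :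
    ∫ t in b⁻¹..a⁻¹, f t = ∫ t in a..b, f t := by
  have hpos : ∀ x ∈ uIcc a b, 0 < x := fun x hx => lt_of_lt_of_le (lt_min ha hb) hx.1
  have hsubst := intervalIntegral.integral_comp_mul_deriv' (f := fun x => x⁻¹)
    (f' := fun x => -(x ^ 2)⁻¹) (g := f)
    (fun x hx => hasDerivAt_inv (hpos x hx).ne')
    (ContinuousOn.neg (ContinuousOn.inv₀ (by fun_prop) fun x hx => pow_ne_zero 2 (hpos x hx).ne'))
    (hf.mono fun _ ⟨x, hx, hfx⟩ => hfx ▸ inv_pos.2 (hpos x hx))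
  have hcongr : EqOn (fun x => (f ∘ fun x => x⁻¹) x * -(x ^ 2)⁻¹) (fun x => -f x) (uIcc a b) := by
    intro x hx
    have hx0 := hpos x hx
    simp only [Function.comp_apply, hsymm x hx0]
    field_simp
  rw [intervalIntegral.integral_congr hcongr, intervalIntegral.integral_neg] at hsubst
  rw [intervalIntegral.integral_symm, ← hsubst, neg_neg]

/-- the case `k = 4`. -/
theorem stmt2 (x y : ℝ) (hy : 0 < y) (hxy : y < x) :
    2*π*y + ∑' n : ℕ, (rk 4 (n+1) : ℝ) / ((n:ℝ)+1) *
      (Real.exp (-π*((n:ℝ)+1)*(x-y)) - Real.exp (-π*((n:ℝ)+1)*(x+y)))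
    = 2*π*y/(x^2-y^2) + ∑' n : ℕ, (rk 4 (n+1) : ℝ) / ((n:ℝ)+1) *
      (Real.exp (-π*((n:ℝ)+1)/(x+y)) - Real.exp (-π*((n:ℝ)+1)/(x-y))) := by
  have ha : 0 < x - y := by linarith
  have hb : 0 < x + y := by linarith
  have hab : x - y ≤ x + y := by linarith
  have hlhs := tsum_rk_div_mul_exp_sub ha hab 4
  have hrhs := tsum_rk_div_mul_exp_sub (inv_pos.2 hb) (inv_anti₀ ha hab) 4
  rw [integral_inv_eq_of_inv_symm (f := fun t => theta t ^ 4) (continuousOn_theta.pow 4)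
    (fun t => theta_inv_pow_four) ha hb] at hrhs
  simp only [← div_eq_mul_inv] at hrhs
  have hinv : (x - y)⁻¹ - (x + y)⁻¹ = 2 * y / (x ^ 2 - y ^ 2) := by
    rw [inv_sub_inv ha.ne' hb.ne']
    ring
  rw [hlhs, hrhs, hinv]
  ring
end

section
/- Let x > 0 be a real number and z a real number. Then x^{1/4} · e^{z²/8} · (1 + 2 Σ_{n=1}^∞ e^{−πn²x} cos(√(πx) · n z)) = x^{−1/4} · e^{−z²/8} · (1 + 2 Σ_{n=1}^∞ e^{−πn²/x} cosh(√(π/x) · n z)). -/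
open scoped Real BigOperators

/-! Both sides are values of the Jacobi theta function `θ(w, τ) = ∑ₙ exp(2πinw + πin²τ)` on the
imaginary axis: pairing `n` with `-n` turns the series into a cosine series, which for `w` real
gives the `cos` side and for `w` imaginary the `cosh` side. The identity is then the modular
transformation `θ(w, τ) = (-iτ)^(-1/2) exp(-πiw²/τ) θ(w/τ, -1/τ)` at `τ = ix`, `w = √(πx) z / 2π`. -/

open Complex

lemma jacobiTheta₂_term_add_term_neg (n : ℤ) (w τ : ℂ) :
    jacobiTheta₂_term n w τ + jacobiTheta₂_term (-n) w τ =
      2 * (cexp (π * I * n ^ 2 * τ) * Complex.cos (2 * π * n * w)) := by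
  simp only [jacobiTheta₂_term, Complex.cos, Complex.exp_add]
  push_cast
  ring_nf

lemma jacobiTheta₂_eq_one_add_two_tsum (w : ℂ) {τ : ℂ} (hτ : 0 < τ.im) :
    jacobiTheta₂ w τ =
      1 + 2 * ∑' n : ℕ, cexp (π * I * (n + 1) ^ 2 * τ) * Complex.cos (2 * π * (n + 1) * w) := by
  have hf := (summable_jacobiTheta₂_term_iff w τ).mpr hτ
  have hpos : Summable fun n : ℕ ↦ jacobiTheta₂_term (n + 1) w τ :=
    hf.comp_injective (i := fun n : ℕ ↦ (n : ℤ) + 1) fun a b h ↦ by simp only at h; omega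
  have hneg : Summable fun n : ℕ ↦ jacobiTheta₂_term (-(n + 1)) w τ :=
    hf.comp_injective (i := fun n : ℕ ↦ -((n : ℤ) + 1)) fun a b h ↦ by simp only at h; omega
  have h0 : jacobiTheta₂_term 0 w τ = 1 := by simp [jacobiTheta₂_term]
  rw [jacobiTheta₂, tsum_of_add_one_of_neg_add_one (f := (jacobiTheta₂_term · w τ)) hpos hneg,
    h0, add_right_comm, ← hpos.tsum_add hneg, ← tsum_mul_left, add_comm]
  congr 1
  refine tsum_congr fun n ↦ ?_
  rw [jacobiTheta₂_term_add_term_neg]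
  push_cast
  ring_nf

lemma jacobiTheta₂_ofReal_div_two_pi (c z : ℝ) {s : ℝ} (hs : 0 < s) :
    jacobiTheta₂ (c * z / (2 * π)) (I * s) =
      ((1 + 2 * ∑' n : ℕ, Real.exp (-π * (n + 1) ^ 2 * s) * Real.cos (c * (n + 1) * z) : ℝ) : ℂ) := by
  rw [jacobiTheta₂_eq_one_add_two_tsum _ (by simpa using hs)]
  push_cast
  congr 2
  refine tsum_congr fun n ↦ ?_
  congr 1
  · congr 1; ring_nf; rw [I_sq]; ring
  · congr 1; field_simp

lemma jacobiTheta₂_I_mul_ofReal_div_two_pi (c z : ℝ) {s : ℝ} (hs : 0 < s) :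
    jacobiTheta₂ (I * (c * z / (2 * π))) (I * s) =
      ((1 + 2 * ∑' n : ℕ, Real.exp (-π * (n + 1) ^ 2 * s) * Real.cosh (c * (n + 1) * z) : ℝ) : ℂ) := by
  rw [jacobiTheta₂_eq_one_add_two_tsum _ (by simpa using hs)]
  push_cast
  congr 2
  refine tsum_congr fun n ↦ ?_
  congr 1
  · congr 1; ring_nf; rw [I_sq]; ring
  · rw [← Complex.cos_mul_I]; congr 1; field_simp

lemma jacobiTheta₂_I_mul_functional_equation (w : ℂ) {s : ℝ} (hs : 0 < s) :
    jacobiTheta₂ w (I * s) =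
      ((s ^ (-(1 / 2) : ℝ) : ℝ) : ℂ) * cexp (-π * w ^ 2 / s) * jacobiTheta₂ (I * w / s) (I * ↑s⁻¹) := by
  have hs' : (s : ℂ) ≠ 0 := by exact_mod_cast hs.ne'
  have hτ : -I * (I * s) = s := by ring_nf; rw [I_sq]; ring
  have hexp : -π * I * w ^ 2 / (I * s) = -π * w ^ 2 / s := by field_simp
  have hw : w / (I * s) = -(I * w / s) := by field_simp; ring_nf; rw [I_sq]; ring
  have hτ' : -1 / (I * s) = I * ↑s⁻¹ := by push_cast; field_simp; rw [I_sq]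
  rw [jacobiTheta₂_functional_equation, hτ, hexp, hw, hτ', jacobiTheta₂_neg_left,
    Real.rpow_neg hs.le, Complex.ofReal_inv, one_div]
  norm_num [Complex.ofReal_cpow hs.le]

/-- the case `k = 1` of Popov's formula. -/
theorem stmt4 (x : ℝ) (hx : 0 < x) (z : ℝ) :
    x ^ ((1:ℝ)/4) * Real.exp (z^2/8)
      * (1 + 2 * ∑' n : ℕ, Real.exp (-π*((n:ℝ)+1)^2*x) * Real.cos (Real.sqrt (π*x) * ((n:ℝ)+1) * z))
    = x ^ (-(1:ℝ)/4) * Real.exp (-z^2/8)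
      * (1 + 2 * ∑' n : ℕ, Real.exp (-π*((n:ℝ)+1)^2/x) * Real.cosh (Real.sqrt (π/x) * ((n:ℝ)+1) * z)) := by
  have hsqrt : Real.sqrt (π * x) / x = Real.sqrt (π / x) := by
    rw [Real.sqrt_div' _ hx.le, div_eq_div_iff hx.ne' (Real.sqrt_pos.mpr hx).ne',
      Real.sqrt_mul' _ hx.le, mul_assoc, Real.mul_self_sqrt hx.le]
  have hw : I * (Real.sqrt (π * x) * z / (2 * π)) / x = I * (Real.sqrt (π / x) * z / (2 * π)) := by
    rw [← hsqrt]; push_cast; ring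
  have hexp : -π * (Real.sqrt (π * x) * z / (2 * π) : ℂ) ^ 2 / x = ((-(z ^ 2 / 4) : ℝ) : ℂ) := by
    have hx' : (x : ℂ) ≠ 0 := by exact_mod_cast hx.ne'
    rw [div_pow, mul_pow, ← Complex.ofReal_pow, Real.sq_sqrt (by positivity)]
    push_cast
    field_simp
    ring
  have hθ := jacobiTheta₂_I_mul_functional_equation (Real.sqrt (π * x) * z / (2 * π)) hx
  rw [hw, hexp, ← Complex.ofReal_exp, jacobiTheta₂_ofReal_div_two_pi _ _ hx,
    jacobiTheta₂_I_mul_ofReal_div_two_pi _ _ (inv_pos.mpr hx), ← Complex.ofReal_mul,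
    ← Complex.ofReal_mul] at hθ
  rw [Complex.ofReal_injective hθ,
    show x ^ (-(1:ℝ)/4) = x ^ ((1:ℝ)/4) * x ^ (-(1/2) : ℝ) by rw [← Real.rpow_add hx]; norm_num,
    show Real.exp (-z^2/8) = Real.exp (z^2/8) * Real.exp (-(z^2/4)) by rw [← Real.exp_add]; ring_nf]
  simp only [div_eq_mul_inv]
  ring
end

section
/- Let ν > −1/2 be a real number and z ∈ ℂ. Then |Σ_{m=0}^∞ (z/2)^{2m} / (m! · Γ(m+ν+1))| ≤ e^{|Re(z)|} / Γ(ν+1). (Equivalently, |(z/2)^{−ν} I_ν(z)| ≤ e^{|Re(z)|}/Γ(ν+1), where I_ν is the modified Bessel function of the first kind.) -/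
/-!
Poisson's integral: in the variable `s = t²`,
`√π Γ(ν + 1/2) Σₘ (z/2)^(2m) / (m! Γ(m + ν + 1))`
  `= ∫₀¹ cosh (z √s) s^(-1/2) (1 - s)^(ν - 1/2) ds`.
Expanding `cosh` and integrating termwise, each term is a Beta integral
`B(m + 1/2, ν + 1/2)`, and Legendre's duplication formula `Γ(m + 1/2) m! = (2m)! √π / 4^m`
turns it into the corresponding term of the series. Since `‖cosh w‖ ≤ exp |Re w|` and
`0 < √s < 1`, the integral is at most `exp |Re z|` times the total mass of the weight,
`B(1/2, ν + 1/2) = √π Γ(ν + 1/2) / Γ(ν + 1)`.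
-/

open scoped Real BigOperators

open MeasureTheory Set

namespace Complex

lemma norm_cosh_le_exp_abs_re (w : ℂ) : ‖cosh w‖ ≤ Real.exp |w.re| := by
  have hexp : ∀ x : ℝ, Real.exp x ≤ Real.exp |x| := fun x => Real.exp_le_exp.mpr (le_abs_self x)
  calc ‖cosh w‖ = ‖exp w + exp (-w)‖ / 2 := by
        rw [cosh, norm_div, Complex.norm_two]
    _ ≤ (Real.exp w.re + Real.exp (-w.re)) / 2 := by
        gcongr
        simpa only [Complex.norm_exp, neg_re] using norm_add_le (exp w) (exp (-w))
    _ ≤ Real.exp |w.re| := by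
        linarith [hexp w.re, abs_neg w.re ▸ hexp (-w.re)]

end Complex

section BetaIntegral

variable {a b : ℝ}

lemma ofReal_cpow_mul_one_sub_cpow {x : ℝ} (hx : x ∈ Icc (0 : ℝ) 1) :
    (x : ℂ) ^ ((a : ℂ) - 1) * (1 - (x : ℂ)) ^ ((b : ℂ) - 1)
      = ((x ^ (a - 1) * (1 - x) ^ (b - 1) : ℝ) : ℂ) := by
  rw [Complex.ofReal_mul, Complex.ofReal_cpow hx.1, Complex.ofReal_cpow (sub_nonneg.mpr hx.2)]
  push_cast
  rfl

lemma integrableOn_rpow_mul_one_sub_rpow (ha : 0 < a) (hb : 0 < b) :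
    IntegrableOn (fun x : ℝ => x ^ (a - 1) * (1 - x) ^ (b - 1)) (Ioo 0 1) := by
  have hc := (Complex.betaIntegral_convergent (u := a) (v := b) (by simpa) (by simpa)).1
  refine (hc.mono_set Ioo_subset_Ioc_self).re.congr ?_
  filter_upwards [ae_restrict_mem measurableSet_Ioo] with x hx
  simp [ofReal_cpow_mul_one_sub_cpow (Ioo_subset_Icc_self hx)]

lemma integral_rpow_mul_one_sub_rpow (ha : 0 < a) (hb : 0 < b) :
    ∫ x in Ioo (0 : ℝ) 1, x ^ (a - 1) * (1 - x) ^ (b - 1)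
      = Real.Gamma a * Real.Gamma b / Real.Gamma (a + b) := by
  have h := Complex.betaIntegral_eq_Gamma_mul_div a b (by simpa) (by simpa)
  rw [Complex.betaIntegral, intervalIntegral.integral_of_le zero_le_one,
    integral_Ioc_eq_integral_Ioo,
    setIntegral_congr_fun measurableSet_Ioo
      (fun x hx => ofReal_cpow_mul_one_sub_cpow (Ioo_subset_Icc_self hx)),
    integral_complex_ofReal, ← Complex.ofReal_add, Complex.Gamma_ofReal, Complex.Gamma_ofReal,
    Complex.Gamma_ofReal] at h
  exact_mod_cast h

end BetaIntegral

lemma Real.Gamma_nat_add_half_mul_factorial (m : ℕ) :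
    Real.Gamma (m + 1 / 2) * m.factorial = (2 * m).factorial * √π / 4 ^ m := by
  have h := Real.Gamma_mul_Gamma_add_half ((m : ℝ) + 1 / 2)
  rw [show (m : ℝ) + 1 / 2 + 1 / 2 = ((m : ℕ) : ℝ) + 1 by ring, Real.Gamma_nat_eq_factorial,
    show 2 * ((m : ℝ) + 1 / 2) = ((2 * m : ℕ) : ℝ) + 1 by push_cast; ring,
    Real.Gamma_nat_eq_factorial,
    show 1 - (((2 * m : ℕ) : ℝ) + 1) = -((2 * m : ℕ) : ℝ) by ring,
    Real.rpow_neg zero_le_two, Real.rpow_natCast, pow_mul] at h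
  rw [h]
  norm_num
  ring

section PoissonIntegral

variable {ν : ℝ}

/-- Under `s = t²` the Poisson weight `(1 - t²) ^ (ν - 1/2) dt` becomes
`poissonWeight ν s ds / 2`. -/
noncomputable def poissonWeight (ν s : ℝ) : ℝ :=
  s ^ ((1 / 2 : ℝ) - 1) * (1 - s) ^ ((ν + 1 / 2) - 1)

lemma poissonWeight_nonneg {s : ℝ} (hs : s ∈ Ioo (0 : ℝ) 1) : 0 ≤ poissonWeight ν s :=
  mul_nonneg (Real.rpow_nonneg hs.1.le _) (Real.rpow_nonneg (sub_nonneg.mpr hs.2.le) _)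

lemma pow_mul_poissonWeight {s : ℝ} (hs : 0 < s) (m : ℕ) :
    s ^ m * poissonWeight ν s = s ^ (((m : ℝ) + 1 / 2) - 1) * (1 - s) ^ ((ν + 1 / 2) - 1) := by
  rw [poissonWeight, ← mul_assoc, ← Real.rpow_natCast, ← Real.rpow_add hs]
  ring_nf

lemma integrableOn_pow_mul_poissonWeight (hν : -1 / 2 < ν) (m : ℕ) :
    IntegrableOn (fun s => s ^ m * poissonWeight ν s) (Ioo 0 1) := by
  refine (integrableOn_rpow_mul_one_sub_rpow (a := m + 1 / 2) (b := ν + 1 / 2)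
    (by positivity) (by linarith)).congr ?_
  filter_upwards [ae_restrict_mem measurableSet_Ioo] with s hs
  exact (pow_mul_poissonWeight hs.1 m).symm

lemma integrableOn_poissonWeight (hν : -1 / 2 < ν) :
    IntegrableOn (poissonWeight ν) (Ioo 0 1) := by
  simpa using integrableOn_pow_mul_poissonWeight hν 0

lemma integral_pow_mul_poissonWeight (hν : -1 / 2 < ν) (m : ℕ) :
    ∫ s in Ioo (0 : ℝ) 1, s ^ m * poissonWeight ν s
      = Real.Gamma (m + 1 / 2) * Real.Gamma (ν + 1 / 2) / Real.Gamma (m + ν + 1) := by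
  rw [setIntegral_congr_fun measurableSet_Ioo (fun s hs => pow_mul_poissonWeight hs.1 m),
    integral_rpow_mul_one_sub_rpow (by positivity) (by linarith)]
  ring_nf

lemma integral_poissonWeight (hν : -1 / 2 < ν) :
    ∫ s in Ioo (0 : ℝ) 1, poissonWeight ν s
      = √π * Real.Gamma (ν + 1 / 2) / Real.Gamma (ν + 1) := by
  simpa [-one_div, Real.Gamma_one_half_eq] using integral_pow_mul_poissonWeight hν 0

lemma integral_cosh_series_term (hν : -1 / 2 < ν) (z : ℂ) (m : ℕ) :
    ∫ s in Ioo (0 : ℝ) 1, (z * √s) ^ (2 * m) / (2 * m).factorial * (poissonWeight ν s : ℂ)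
      = (√π * Real.Gamma (ν + 1 / 2) : ℝ) *
        ((z / 2) ^ (2 * m) / (m.factorial * (Real.Gamma (m + ν + 1) : ℂ))) := by
  have hpow : ∀ s ∈ Ioo (0 : ℝ) 1,
      (z * √s) ^ (2 * m) / (2 * m).factorial * (poissonWeight ν s : ℂ)
        = z ^ (2 * m) / (2 * m).factorial * ((s ^ m * poissonWeight ν s : ℝ) : ℂ) := by
    intro s hs
    rw [mul_pow, pow_mul (√s : ℂ), ← Complex.ofReal_pow, Real.sq_sqrt hs.1.le]
    push_cast
    ring
  rw [setIntegral_congr_fun measurableSet_Ioo hpow, integral_const_mul, integral_complex_ofReal,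
    integral_pow_mul_poissonWeight hν m]
  rw [eq_div_of_mul_eq (by positivity) (Real.Gamma_nat_add_half_mul_factorial m)]
  have hΓ : Real.Gamma (m + ν + 1) ≠ 0 :=
    (Real.Gamma_pos_of_pos (by linarith [m.cast_nonneg (α := ℝ)])).ne'
  have h2m : ((2 * m).factorial : ℂ) ≠ 0 := by exact_mod_cast (2 * m).factorial_ne_zero
  have hm : (m.factorial : ℂ) ≠ 0 := by exact_mod_cast m.factorial_ne_zero
  rw [div_pow, pow_mul (2 : ℂ)]
  push_cast
  field_simp
  ring

lemma norm_cosh_series_term_le (z : ℂ) (m : ℕ) {s : ℝ} (hs : s ∈ Ioo (0 : ℝ) 1) :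
    ‖(z * √s) ^ (2 * m) / (2 * m).factorial * (poissonWeight ν s : ℂ)‖
      ≤ ‖z‖ ^ (2 * m) / (2 * m).factorial * poissonWeight ν s := by
  have hsqrt : √s ≤ 1 := Real.sqrt_le_one.mpr hs.2.le
  rw [norm_mul, norm_div, norm_pow, norm_mul, Complex.norm_real, Complex.norm_real,
    Complex.norm_natCast, Real.norm_of_nonneg (Real.sqrt_nonneg s),
    Real.norm_of_nonneg (poissonWeight_nonneg hs)]
  gcongr
  · exact poissonWeight_nonneg hs
  · exact mul_le_of_le_one_right (norm_nonneg z) hsqrt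

lemma integral_cosh_mul_poissonWeight (hν : -1 / 2 < ν) (z : ℂ) :
    ∫ s in Ioo (0 : ℝ) 1, Complex.cosh (z * √s) * (poissonWeight ν s : ℂ)
      = (√π * Real.Gamma (ν + 1 / 2) : ℝ) *
        ∑' m : ℕ, (z / 2) ^ (2 * m) / (m.factorial * (Real.Gamma (m + ν + 1) : ℂ)) := by
  set F : ℕ → ℝ → ℂ :=
    fun m s => (z * √s) ^ (2 * m) / (2 * m).factorial * (poissonWeight ν s : ℂ)
  have hw := integrableOn_poissonWeight hν
  have hF_int : ∀ m, IntegrableOn (F m) (Ioo 0 1) := fun m =>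
    Integrable.mono' (hw.const_mul _) (by unfold F poissonWeight; fun_prop)
      ((ae_restrict_iff' measurableSet_Ioo).mpr (ae_of_all _ fun s hs =>
        norm_cosh_series_term_le z m hs))
  have hF_sum : Summable fun m => ∫ s in Ioo (0 : ℝ) 1, ‖F m s‖ := by
    refine Summable.of_nonneg_of_le (fun m => integral_nonneg fun s => norm_nonneg _)
      (fun m => ?_) ((Real.hasSum_cosh ‖z‖).summable.mul_right
        (∫ s in Ioo (0 : ℝ) 1, poissonWeight ν s))
    rw [← integral_const_mul]
    exact setIntegral_mono_on (hF_int m).norm (hw.const_mul _) measurableSet_Ioo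
      fun s hs => norm_cosh_series_term_le z m hs
  have h := hasSum_integral_of_summable_integral_norm hF_int hF_sum
  simp only [F, integral_cosh_series_term hν z] at h
  rw [← tsum_mul_left, h.tsum_eq]
  congr 1 with s
  exact (((Complex.hasSum_cosh _).mul_right _).tsum_eq).symm

lemma norm_integral_cosh_mul_poissonWeight_le (hν : -1 / 2 < ν) (z : ℂ) :
    ‖∫ s in Ioo (0 : ℝ) 1, Complex.cosh (z * √s) * (poissonWeight ν s : ℂ)‖
      ≤ Real.exp |z.re| * ∫ s in Ioo (0 : ℝ) 1, poissonWeight ν s := by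
  have hw := integrableOn_poissonWeight hν
  rw [← integral_const_mul]
  refine norm_integral_le_of_norm_le (hw.const_mul _)
    ((ae_restrict_iff' measurableSet_Ioo).mpr (ae_of_all _ fun s hs => ?_))
  have hre : |(z * √s).re| ≤ |z.re| := by
    rw [Complex.re_mul_ofReal, abs_mul, abs_of_nonneg (Real.sqrt_nonneg s)]
    exact mul_le_of_le_one_right (abs_nonneg _) (Real.sqrt_le_one.mpr hs.2.le)
  rw [norm_mul, Complex.norm_real, Real.norm_of_nonneg (poissonWeight_nonneg hs)]
  gcongr
  · exact poissonWeight_nonneg hs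
  · exact (Complex.norm_cosh_le_exp_abs_re _).trans (Real.exp_le_exp.mpr hre)

end PoissonIntegral

/-- bound for the normalized modified Bessel function. -/
theorem stmt10 (ν : ℝ) (hν : -1/2 < ν) (z : ℂ) :
    ‖(∑' m : ℕ, (z/2)^(2*m) / ((m.factorial : ℂ) * ((Real.Gamma ((m:ℝ)+ν+1) : ℝ) : ℂ)))‖
      ≤ Real.exp |z.re| / Real.Gamma (ν+1) := by
  have hC : 0 < √π * Real.Gamma (ν + 1 / 2) :=
    mul_pos (Real.sqrt_pos.mpr Real.pi_pos) (Real.Gamma_pos_of_pos (by linarith))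
  have h := norm_integral_cosh_mul_poissonWeight_le hν z
  rw [integral_cosh_mul_poissonWeight hν z, integral_poissonWeight hν, norm_mul,
    Complex.norm_real, Real.norm_of_nonneg hC.le] at h
  exact le_of_mul_le_mul_left (h.trans_eq (by ring)) hC
end

section
/- Let k ≥ 1 be an integer, α > β > 0, σ > 1/4 a real number, and X > 0. Then e^{−αX} · J_{k/4 − 1/2}(βX) = (β/(2α))^{k/4 − 1/2} / (2π Γ(k/4 + 1/2)) · ∫_{−∞}^∞ Γ(σ + it + k/4 − 1/2) · ₂F₁((4(σ+it) + k − 2)/8, (4(σ+it) + k + 2)/8; k/4 + 1/2; −β²/α²) · (αX)^{−σ−it} dt. -/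
open scoped Real BigOperators

/-!
Write `ν = k/4 - 1/2`, `c = σ + ν`, `y = αX` and `q = β²/(4α²)`. The duplication formula
`(s/2)_ℓ ((s+1)/2)_ℓ 4^ℓ = (s)_{2ℓ}` together with `Γ(s + n) = Γ(s) (s)_n` turns
`Γ(s) ₂F₁(s/2, (s+1)/2; ν+1; -4q)` into `∑_ℓ Γ(s + 2ℓ) (-q)^ℓ / ((ν+1)_ℓ ℓ!)`. On the line
`Re s = c` one has `|Γ(s)| ≤ Γ(c+2)/|s(s+1)|`, and since `4q < 1` the coefficients
`q^ℓ Γ(c+2ℓ+2)/((ν+1)_ℓ ℓ!)` are summable by the ratio test, so the series may be integrated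
termwise. Each term is the Mellin inversion of `Γ(s) = ∫ e^{-x} x^{s-1} dx`, namely
`∫ Γ(c'+it) y^{-c'-it} dt = 2π e^{-y}`, and what remains is the power series of `J_ν(βX)`
because `q y² = (βX/2)²`.
-/

open MeasureTheory Filter Complex
open scoped Real Topology Nat

lemma ascPochhammer_eval_half_mul_eval_half_add_one {K : Type*} [Field K] [CharZero K]
    (x : K) (n : ℕ) :
    (ascPochhammer K n).eval (x / 2) * (ascPochhammer K n).eval ((x + 1) / 2) * 4 ^ n =
      (ascPochhammer K (2 * n)).eval x := by
  induction n with
  | zero => simp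
  | succ n ih =>
    rw [show 2 * (n + 1) = 2 * n + 1 + 1 by ring, ascPochhammer_succ_right,
      ascPochhammer_succ_right, ascPochhammer_succ_right]
    simp only [Polynomial.eval_mul, Polynomial.eval_add, Polynomial.eval_X,
      Polynomial.eval_natCast, ← ih]
    push_cast
    ring

namespace Complex

@[norm_cast]
lemma ofReal_ascPochhammer_eval (x : ℝ) (n : ℕ) :
    (((ascPochhammer ℝ n).eval x : ℝ) : ℂ) = (ascPochhammer ℂ n).eval (x : ℂ) := by
  rw [ascPochhammer_eval₂ ofRealHom]
  exact (Polynomial.eval₂_at_apply ofRealHom x).symm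

lemma ne_neg_natCast_of_re_pos {z : ℂ} (hz : 0 < z.re) (n : ℕ) : z ≠ -n := by
  rintro rfl
  simp only [neg_re, natCast_re, Left.neg_pos_iff] at hz
  exact (Nat.cast_nonneg n).not_gt hz

lemma Gamma_add_nat_eq_mul_ascPochhammer {z : ℂ} (hz : 0 < z.re) (n : ℕ) :
    Gamma (z + n) = Gamma z * (ascPochhammer ℂ n).eval z := by
  rw [← Gamma_add_nat_div_Gamma_eq z (ne_neg_natCast_of_re_pos hz),
    mul_div_cancel₀ _ (Gamma_ne_zero_of_re_pos hz)]

lemma norm_Gamma_le_Gamma_re {s : ℂ} (hs : 0 < s.re) : ‖Gamma s‖ ≤ Real.Gamma s.re := by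
  rw [Gamma_eq_integral hs, Real.Gamma_eq_integral hs, GammaIntegral]
  refine (norm_integral_le_integral_norm _).trans_eq <|
    setIntegral_congr_fun measurableSet_Ioi fun x hx => ?_
  rw [norm_mul, norm_real, norm_cpow_eq_rpow_re_of_pos hx,
    Real.norm_of_nonneg (Real.exp_pos _).le]
  simp

lemma norm_Gamma_le_div {c : ℝ} (hc : 0 < c) (t : ℝ) :
    ‖Gamma (c + t * I)‖ ≤ Real.Gamma (c + 2) / (c ^ 2 + t ^ 2) := by
  set s : ℂ := c + t * I
  have hre : s.re = c := by simp [s]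
  have hs : s * (s + 1) ≠ 0 :=
    mul_ne_zero (ne_zero_of_re_pos (by rwa [hre])) (ne_zero_of_re_pos (by simp [hre]; linarith))
  have hshift : Gamma (s + 2) = Gamma s * (s * (s + 1)) := by
    simpa [ascPochhammer_succ_right, mul_add] using
      Gamma_add_nat_eq_mul_ascPochhammer (hre ▸ hc) 2
  have hΓ : ‖Gamma (s + 2)‖ ≤ Real.Gamma (c + 2) := by
    simpa [hre] using norm_Gamma_le_Gamma_re (s := s + 2) (by simp [hre]; linarith)
  have hden : c ^ 2 + t ^ 2 ≤ ‖s‖ * ‖s + 1‖ := by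
    have h1 : s + 1 = ((c + 1 : ℝ) : ℂ) + t * I := by push_cast [s]; ring
    rw [h1, norm_add_mul_I, norm_add_mul_I, ← Real.sqrt_mul (by positivity)]
    exact Real.le_sqrt_of_sq_le (by nlinarith [sq_nonneg t])
  rw [eq_div_of_mul_eq hs hshift.symm, norm_div, norm_mul]
  exact div_le_div₀ (Real.Gamma_pos_of_pos (by linarith)).le hΓ (by positivity) hden

lemma norm_Gamma_vertical_mul_le {a c : ℝ} (ha : 0 < a) (hac : a ≤ c) {h : ℝ → ℂ} {K : ℝ}
    (hK : ∀ t, ‖h t‖ ≤ K) (t : ℝ) :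
    ‖Gamma (c + t * I) * h t‖ ≤ Real.Gamma (c + 2) / min (a ^ 2) 1 * K * (1 + t ^ 2)⁻¹ := by
  have hK0 : 0 ≤ K := (norm_nonneg _).trans (hK 0)
  have hm : 0 < min (a ^ 2) 1 := lt_min (by positivity) one_pos
  have hden : min (a ^ 2) 1 * (1 + t ^ 2) ≤ c ^ 2 + t ^ 2 := by
    nlinarith [min_le_left (a ^ 2) 1, min_le_right (a ^ 2) 1, sq_nonneg t]
  calc ‖Gamma (c + t * I) * h t‖
      ≤ Real.Gamma (c + 2) / (c ^ 2 + t ^ 2) * K := by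
        rw [norm_mul]
        exact mul_le_mul (norm_Gamma_le_div (ha.trans_le hac) t) (hK t) (norm_nonneg _)
          (div_nonneg (Real.Gamma_pos_of_pos (by linarith)).le (by positivity))
    _ ≤ Real.Gamma (c + 2) / (min (a ^ 2) 1 * (1 + t ^ 2)) * K := by
        gcongr
        · exact (Real.Gamma_pos_of_pos (by linarith)).le
    _ = Real.Gamma (c + 2) / min (a ^ 2) 1 * K * (1 + t ^ 2)⁻¹ := by
        field_simp

lemma continuous_Gamma_vertical {c : ℝ} (hc : 0 < c) :
    Continuous fun t : ℝ => Gamma (c + t * I) :=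
  continuous_iff_continuousAt.mpr fun t =>
    (differentiableAt_Gamma _ (ne_neg_natCast_of_re_pos (by simpa using hc))).continuousAt.comp
      (x := t) (by fun_prop)

lemma integrable_Gamma_vertical_mul {c : ℝ} (hc : 0 < c) {h : ℝ → ℂ}
    (hm : AEStronglyMeasurable h) {K : ℝ} (hK : ∀ t, ‖h t‖ ≤ K) :
    Integrable fun t : ℝ => Gamma (c + t * I) * h t :=
  (integrable_inv_one_add_sq.const_mul _).mono'
    ((continuous_Gamma_vertical hc).aestronglyMeasurable.mul hm)
    (Eventually.of_forall (norm_Gamma_vertical_mul_le hc le_rfl hK))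

lemma integral_norm_Gamma_vertical_mul_le {a c : ℝ} (ha : 0 < a) (hac : a ≤ c) {h : ℝ → ℂ}
    (hm : AEStronglyMeasurable h) {K : ℝ} (hK : ∀ t, ‖h t‖ ≤ K) :
    ∫ t : ℝ, ‖Gamma (c + t * I) * h t‖ ≤ Real.Gamma (c + 2) / min (a ^ 2) 1 * K * π := by
  rw [← integral_univ_inv_one_add_sq, ← integral_const_mul]
  exact integral_mono (integrable_Gamma_vertical_mul (ha.trans_le hac) hm hK).norm
    (integrable_inv_one_add_sq.const_mul _) (norm_Gamma_vertical_mul_le ha hac hK)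

lemma integral_Gamma_vertical_mul_cpow {c y : ℝ} (hc : 0 < c) (hy : 0 < y) :
    ∫ t : ℝ, Gamma (c + t * I) * (y : ℂ) ^ (-(c + t * I)) = 2 * π * Real.exp (-y) := by
  set f : ℝ → ℂ := fun x => (Real.exp (-x) : ℂ)
  have hmellin : ∀ t : ℝ, mellin f (c + t * I) = Gamma (c + t * I) := fun t => by
    rw [Gamma_eq_integral (by simpa using hc), GammaIntegral_eq_mellin]
  have hf : MellinConvergent f c :=
    (GammaIntegral_convergent (s := c) (by simpa using hc)).congr_fun
      (fun x _ => by simp [f, mul_comm]) measurableSet_Ioi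
  have hFf : VerticalIntegrable (mellin f) c := by
    simpa [VerticalIntegrable, hmellin] using
      integrable_Gamma_vertical_mul hc aestronglyMeasurable_const (K := 1) (fun _ => norm_one.le)
  have hinv := mellinInv_mellin_eq c f hy hf hFf (by fun_prop)
  simp only [mellinInv, hmellin, smul_eq_mul, f] at hinv
  rw [← hinv, real_smul, ← mul_assoc, ofReal_div, ofReal_one, ← ofReal_ofNat, ← ofReal_mul,
    mul_one_div_cancel (by simp [Real.pi_ne_zero]), one_mul]
  exact integral_congr_ae (Eventually.of_forall fun t => by simp only [mul_comm])

lemma integral_tsum_Gamma_mul_cpow {c y : ℝ} (hc : 0 < c) (hy : 0 < y) {a : ℕ → ℂ}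
    (ha : Summable fun ℓ : ℕ => ‖a ℓ‖ * Real.Gamma (c + 2 * ℓ + 2)) :
    ∫ t : ℝ, ∑' ℓ : ℕ, a ℓ * Gamma (c + t * I + 2 * ℓ) * (y : ℂ) ^ (-(c + t * I)) =
      2 * π * Real.exp (-y) * ∑' ℓ : ℕ, a ℓ * (y : ℂ) ^ (2 * ℓ) := by
  set F : ℕ → ℝ → ℂ := fun ℓ t => a ℓ * Gamma (c + t * I + 2 * ℓ) * (y : ℂ) ^ (-(c + t * I))
  have hcpow_norm (t : ℝ) : ‖(y : ℂ) ^ (-(c + t * I))‖ = y ^ (-c) := by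
    simp [norm_cpow_eq_rpow_re_of_pos hy]
  have hcpow_meas : AEStronglyMeasurable fun t : ℝ => (y : ℂ) ^ (-(c + t * I)) :=
    (Continuous.const_cpow (by fun_prop)
      (Or.inl (by exact_mod_cast hy.ne'))).aestronglyMeasurable
  have hF (ℓ : ℕ) : F ℓ = fun t : ℝ => Gamma ((c + 2 * ℓ : ℝ) + t * I) *
      (a ℓ * (y : ℂ) ^ (-(c + t * I))) := by
    ext t; simp only [F]; push_cast; ring_nf
  have hF_int (ℓ : ℕ) : Integrable (F ℓ) := by
    rw [hF]
    exact integrable_Gamma_vertical_mul (by positivity) (hcpow_meas.const_mul _)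
      (K := ‖a ℓ‖ * y ^ (-c)) fun t => by rw [norm_mul, hcpow_norm]
  have hF_norm : Summable fun ℓ => ∫ t, ‖F ℓ t‖ := by
    refine .of_nonneg_of_le (fun ℓ => integral_nonneg fun t => norm_nonneg _) (fun ℓ => ?_)
      (ha.mul_right (y ^ (-c) * π / min (c ^ 2) 1))
    rw [hF]
    refine (integral_norm_Gamma_vertical_mul_le hc (by simp) (hcpow_meas.const_mul _)
      (K := ‖a ℓ‖ * y ^ (-c)) fun t => by rw [norm_mul, hcpow_norm]).trans_eq ?_
    ring
  have hF_integral (ℓ : ℕ) : ∫ t, F ℓ t = 2 * π * Real.exp (-y) * (a ℓ * (y : ℂ) ^ (2 * ℓ)) := by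
    have hsplit (t : ℝ) : F ℓ t = a ℓ * (y : ℂ) ^ (2 * ℓ) *
        (Gamma ((c + 2 * ℓ : ℝ) + t * I) * (y : ℂ) ^ (-((c + 2 * ℓ : ℝ) + t * I))) := by
      have hy' : (y : ℂ) ≠ 0 := by exact_mod_cast hy.ne'
      simp only [F]
      rw [show -((c : ℂ) + t * I) = ((2 * ℓ : ℕ) : ℂ) + -(((c + 2 * ℓ : ℝ) : ℂ) + t * I) by
        push_cast; ring, cpow_add _ _ hy', cpow_natCast]
      push_cast; ring_nf
    simp_rw [hsplit]
    rw [integral_const_mul, integral_Gamma_vertical_mul_cpow (by positivity) hy]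
    ring
  rw [← integral_tsum_of_summable_integral_norm hF_int hF_norm, tsum_congr hF_integral,
    tsum_mul_left]

lemma Gamma_mul_hyp2F1_half_eq_tsum {S : ℂ} (hS : 0 < S.re) (γ u : ℂ) :
    Gamma S * hyp2F1 (S / 2) ((S + 1) / 2) γ (4 * u) =
      ∑' ℓ : ℕ, u ^ ℓ / ((ascPochhammer ℂ ℓ).eval γ * ℓ !) * Gamma (S + 2 * ℓ) := by
  rw [hyp2F1, ← tsum_mul_left]
  refine tsum_congr fun ℓ => ?_
  rw [show S + 2 * (ℓ : ℂ) = S + ((2 * ℓ : ℕ) : ℂ) by push_cast; ring,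
    Gamma_add_nat_eq_mul_ascPochhammer hS, ← ascPochhammer_eval_half_mul_eval_half_add_one,
    mul_pow]
  ring

end Complex

lemma Real.Gamma_add_nat_eq_mul_ascPochhammer {x : ℝ} (hx : 0 < x) (n : ℕ) :
    Real.Gamma (x + n) = Real.Gamma x * (ascPochhammer ℝ n).eval x := by
  have h := Complex.Gamma_add_nat_eq_mul_ascPochhammer (z := x) (by simpa using hx) n
  rw [← ofReal_natCast, ← ofReal_add, Gamma_ofReal, Gamma_ofReal,
    ← ofReal_ascPochhammer_eval] at h
  exact_mod_cast h

lemma tendsto_mul_natCast_add_div_natCast_add (p b d : ℝ) :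
    Tendsto (fun n : ℕ => (p * n + b) / (n + d)) atTop (𝓝 p) := by
  have h : Tendsto (fun n : ℕ => p + (b - p * d) / (n + d)) atTop (𝓝 (p + 0)) :=
    tendsto_const_nhds.add (tendsto_const_nhds.div_atTop
      (tendsto_atTop_add_const_right _ d tendsto_natCast_atTop_atTop))
  rw [add_zero] at h
  refine h.congr' ?_
  filter_upwards [eventually_gt_atTop ⌈-d⌉₊] with n hn
  have : (n : ℝ) + d ≠ 0 := by
    have := Nat.lt_of_ceil_lt hn
    linarith
  field_simp
  ring

lemma summable_pow_mul_Gamma_div_ascPochhammer {a γ q : ℝ} (ha : 0 < a) (hγ : 0 < γ)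
    (hq : 0 < q) (hq4 : 4 * q < 1) :
    Summable fun ℓ : ℕ => q ^ ℓ * Real.Gamma (a + 2 * ℓ) / ((ascPochhammer ℝ ℓ).eval γ * ℓ !) := by
  set D : ℕ → ℝ := fun ℓ => q ^ ℓ * Real.Gamma (a + 2 * ℓ) / ((ascPochhammer ℝ ℓ).eval γ * ℓ !)
  have hD_pos (ℓ : ℕ) : 0 < D ℓ := by
    have := Real.Gamma_pos_of_pos (show 0 < a + 2 * ℓ by positivity)
    have := ascPochhammer_pos ℓ γ hγ
    positivity
  have hratio (ℓ : ℕ) : D (ℓ + 1) / D ℓ =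
      q * ((2 * ℓ + a) / (ℓ + 1)) * ((2 * ℓ + (a + 1)) / (ℓ + γ)) := by
    have hΓ : Real.Gamma (a + 2 * ↑(ℓ + 1)) =
        (a + 2 * ℓ + 1) * ((a + 2 * ℓ) * Real.Gamma (a + 2 * ℓ)) := by
      rw [show a + 2 * ↑(ℓ + 1) = a + 2 * ℓ + 1 + 1 by push_cast; ring,
        Real.Gamma_add_one (by positivity), Real.Gamma_add_one (by positivity)]
    have := Real.Gamma_pos_of_pos (show 0 < a + 2 * ℓ by positivity)
    have := ascPochhammer_pos ℓ γ hγ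
    simp only [D, hΓ, ascPochhammer_succ_right, Polynomial.eval_mul, Polynomial.eval_add,
      Polynomial.eval_X, Polynomial.eval_natCast, Nat.factorial_succ]
    push_cast
    field_simp
    ring
  refine summable_of_ratio_test_tendsto_lt_one (l := q * 2 * 2) (by linarith)
    (Eventually.of_forall fun ℓ => (hD_pos ℓ).ne') ?_
  simp only [Real.norm_of_nonneg (hD_pos _).le, hratio]
  exact (tendsto_const_nhds.mul (tendsto_mul_natCast_add_div_natCast_add 2 a 1)).mul
    (tendsto_mul_natCast_add_div_natCast_add 2 (a + 1) γ)

lemma besselJ_eq_mul_tsum {ν t : ℝ} (hν : 0 < ν + 1) (ht : 0 < t) :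
    besselJ ν t = (t / 2) ^ ν / Real.Gamma (ν + 1) *
      ∑' m : ℕ, (-(t / 2) ^ 2) ^ m / ((ascPochhammer ℝ m).eval (ν + 1) * m !) := by
  rw [besselJ, ← tsum_mul_left]
  refine tsum_congr fun m => ?_
  rw [show (m : ℝ) + ν + 1 = ν + 1 + m by ring, Real.Gamma_add_nat_eq_mul_ascPochhammer hν,
    Real.rpow_add (by positivity), show 2 * (m : ℝ) = ((2 * m : ℕ) : ℝ) by push_cast; ring,
    Real.rpow_natCast, pow_mul, neg_pow ((t / 2) ^ 2)]
  have := Real.Gamma_pos_of_pos hν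
  have := ascPochhammer_pos m (ν + 1) hν
  field_simp

theorem exp_mul_besselJ_eq_integral {ν σ α β X : ℝ} (hν : 0 < ν + 1) (hσν : 0 < σ + ν)
    (hβ : 0 < β) (hβα : β < α) (hX : 0 < X) :
    ((Real.exp (-α * X) * besselJ ν (β * X) : ℝ) : ℂ) =
      (((β / (2 * α)) ^ ν / (2 * π * Real.Gamma (ν + 1)) : ℝ) : ℂ) *
        ∫ t : ℝ, Gamma (σ + I * t + ν) *
          hyp2F1 ((σ + I * t + ν) / 2) ((σ + I * t + ν + 1) / 2) (ν + 1) (-β ^ 2 / α ^ 2) *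
          ((α * X : ℝ) : ℂ) ^ (-σ - I * t) := by
  have hα : 0 < α := hβ.trans hβα
  have hy : 0 < α * X := by positivity
  set q := β ^ 2 / (4 * α ^ 2) with hq
  have hq_pos : 0 < q := by positivity
  have hq4 : 4 * q < 1 := by
    rw [hq, mul_div_assoc', div_lt_one (by positivity)]
    nlinarith
  set a : ℕ → ℝ := fun ℓ => (-q) ^ ℓ / ((ascPochhammer ℝ ℓ).eval (ν + 1) * ℓ !)
  have hexpand (t : ℝ) : Gamma (σ + I * t + ν) *
      hyp2F1 ((σ + I * t + ν) / 2) ((σ + I * t + ν + 1) / 2) (ν + 1) (-β ^ 2 / α ^ 2) *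
      ((α * X : ℝ) : ℂ) ^ (-σ - I * t) =
        ((α * X) ^ ν : ℝ) * ∑' ℓ : ℕ, (a ℓ : ℂ) * Gamma ((σ + ν : ℝ) + t * I + 2 * ℓ) *
          ((α * X : ℝ) : ℂ) ^ (-((σ + ν : ℝ) + t * I)) := by
    have hS : (σ : ℂ) + I * t + ν = ((σ + ν : ℝ) : ℂ) + t * I := by push_cast; ring
    have hz : (-β ^ 2 / α ^ 2 : ℂ) = 4 * (-q : ℝ) := by push_cast [hq]; field_simp
    have hcpow : ((α * X : ℝ) : ℂ) ^ (-σ - I * t) =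
        ((α * X) ^ ν : ℝ) * ((α * X : ℝ) : ℂ) ^ (-((σ + ν : ℝ) + t * I)) := by
      rw [ofReal_cpow hy.le, ← cpow_add _ _ (by exact_mod_cast hy.ne')]
      push_cast; ring_nf
    rw [hS, show (((σ + ν : ℝ) : ℂ) + t * I + 1) = (((σ + ν : ℝ) : ℂ) + t * I) + 1 by ring, hz,
      Gamma_mul_hyp2F1_half_eq_tsum (by simpa using hσν), hcpow, ← tsum_mul_right,
      ← tsum_mul_left]
    refine tsum_congr fun ℓ => ?_
    simp only [a]
    push_cast
    ring
  have hsum : Summable fun ℓ : ℕ => ‖(a ℓ : ℂ)‖ * Real.Gamma (σ + ν + 2 * ℓ + 2) := by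
    refine (summable_pow_mul_Gamma_div_ascPochhammer (a := σ + ν + 2) (by linarith) hν hq_pos
      hq4).congr fun ℓ => ?_
    have := ascPochhammer_pos ℓ (ν + 1) hν
    simp only [a, norm_real, Real.norm_eq_abs, abs_div, abs_mul, abs_pow, abs_neg,
      abs_of_pos hq_pos, abs_of_pos this, Nat.abs_cast]
    ring_nf
  have hseries : ∑' ℓ : ℕ, (a ℓ : ℂ) * ((α * X : ℝ) : ℂ) ^ (2 * ℓ) =
      ((∑' m : ℕ, (-(β * X / 2) ^ 2) ^ m / ((ascPochhammer ℝ m).eval (ν + 1) * m !) : ℝ) : ℂ) := by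
    rw [ofReal_tsum]
    refine tsum_congr fun ℓ => ?_
    simp only [a]
    push_cast
    rw [pow_mul, ← mul_div_right_comm, ← mul_pow]
    congr 2
    have : (α : ℂ) ≠ 0 := by exact_mod_cast hα.ne'
    push_cast [hq]
    field_simp
    ring
  have hbase : (β / (2 * α)) ^ ν * (α * X) ^ ν = (β * X / 2) ^ ν := by
    rw [← Real.mul_rpow (by positivity) hy.le]
    congr 1
    field_simp
  rw [integral_congr_ae (Eventually.of_forall hexpand), integral_const_mul,
    integral_tsum_Gamma_mul_cpow hσν hy hsum, hseries, besselJ_eq_mul_tsum hν (by positivity),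
    ← hbase, neg_mul]
  have := Real.Gamma_pos_of_pos hν
  push_cast
  field_simp

/-- Mellin inversion formula for `e^{-αX} J_{k/4-1/2}(βX)`. -/
theorem stmt12 (k : ℕ) (hk : 1 ≤ k) (α β : ℝ) (hβ : 0 < β) (hβα : β < α)
    (σ : ℝ) (hσ : 1/4 < σ) (X : ℝ) (hX : 0 < X) :
    ((Real.exp (-α*X) * besselJ ((k:ℝ)/4 - 1/2) (β*X) : ℝ) : ℂ)
    = (((β/(2*α)) ^ ((k:ℝ)/4 - 1/2) / (2*π*Real.Gamma ((k:ℝ)/4 + 1/2)) : ℝ) : ℂ) *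
      ∫ t : ℝ, Complex.Gamma ((σ:ℂ) + Complex.I*(t:ℂ) + (k:ℂ)/4 - 1/2)
        * hyp2F1 ((4*((σ:ℂ)+Complex.I*(t:ℂ))+(k:ℂ)-2)/8) ((4*((σ:ℂ)+Complex.I*(t:ℂ))+(k:ℂ)+2)/8)
            ((k:ℂ)/4 + 1/2) (-((β:ℂ))^2/((α:ℂ))^2)
        * ((α*X : ℝ) : ℂ) ^ (-(σ:ℂ) - Complex.I*(t:ℂ)) := by
  have hk' : (1 : ℝ) ≤ k := by exact_mod_cast hk
  rw [show (k : ℝ) / 4 + 1 / 2 = (k / 4 - 1 / 2) + 1 by ring,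
    exp_mul_besselJ_eq_integral (σ := σ) (by linarith) (by linarith) hβ hβα hX]
  congr 1
  refine integral_congr_ae (Eventually.of_forall fun t => ?_)
  push_cast
  ring_nf
end
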